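/- arXiv:2505.05985 — 10 statements merged into one kernel-verified Lean document; each statement's English description precedes it below -/
import Mathlib

section
/- Let λ > 0, Δt > 0. Define the 2×2 matrix G with rows [0, 1] and [(2+λs)/(λs - Δt²λ - 2), (Δt²λ - 4)/(λs - Δt²λ - 2)] where s = Δt²/2. Then both eigenvalues of G are (4 - λΔt² ± 4iΔt√λ)/(4 + λΔt²) and have modulus exactly 1. -/
/-!
Substituting `s = Δt²/2` collapses the matrix to the companion matrix `!![0, 1; -1, 2(4 - x)/(4 + x)]`
with `x = λΔt²`, whose characteristic polynomial is `μ² - 2(4 - x)/(4 + x) μ + 1`. With `r = Δt√λ`,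
its roots are the Cayley transforms `(2 ± ir)/(2 ∓ ir) = (4 - r² ± 4ir)/(4 + r²)`: each is a nonzero
complex number divided by its conjugate, hence lies on the unit circle, and the two are conjugate.
-/

open Matrix Complex ComplexConjugate

theorem Matrix.det_companion_sub_smul_one {R : Type*} [CommRing R] (p q μ : R) :
    (!![0, 1; -(p * q), p + q] - μ • (1 : Matrix (Fin 2) (Fin 2) R)).det = (μ - p) * (μ - q) := by
  simp [det_fin_two]
  ring

theorem Matrix.det_companion_sub_smul_one_eq_zero_iff {R : Type*} [CommRing R] [NoZeroDivisors R]
    {p q μ : R} :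
    (!![0, 1; -(p * q), p + q] - μ • (1 : Matrix (Fin 2) (Fin 2) R)).det = 0 ↔ μ = p ∨ μ = q := by
  rw [det_companion_sub_smul_one, mul_eq_zero, sub_eq_zero, sub_eq_zero]

theorem Complex.norm_div_conj_self {z : ℂ} (hz : z ≠ 0) : ‖z / conj z‖ = 1 := by
  rw [norm_div, norm_conj, div_self (norm_ne_zero_iff.mpr hz)]

theorem Complex.two_add_mul_I_div_conj (r : ℝ) :
    (2 + r * I) / conj (2 + r * I) = (4 - r ^ 2 + 4 * r * I) / (4 + r ^ 2) := by
  have hconj : conj (2 + r * I) = 2 - r * I := by simp [sub_eq_add_neg, map_ofNat]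
  have hden : (4 + r ^ 2 : ℂ) ≠ 0 := by exact_mod_cast (by positivity : (4 + r ^ 2 : ℝ) ≠ 0)
  have hconj_ne : (2 - r * I : ℂ) ≠ 0 := fun h => by simpa using congrArg re h
  rw [hconj, div_eq_div_iff hconj_ne hden]
  linear_combination (4 * (r : ℂ) ^ 2) * I_sq

theorem dg_matrix_entries {lam Δt : ℝ} (hlam : 0 ≤ lam) :
    (2 + lam * (Δt ^ 2 / 2)) / (lam * (Δt ^ 2 / 2) - Δt ^ 2 * lam - 2) = -1 ∧
    (Δt ^ 2 * lam - 4) / (lam * (Δt ^ 2 / 2) - Δt ^ 2 * lam - 2)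
      = 2 * (4 - lam * Δt ^ 2) / (4 + lam * Δt ^ 2) := by
  have hx : 0 ≤ lam * Δt ^ 2 := by positivity
  have hden : lam * (Δt ^ 2 / 2) - Δt ^ 2 * lam - 2 ≠ 0 := by nlinarith
  constructor
  · rw [div_eq_iff hden]; ring
  · rw [div_eq_div_iff hden (by positivity)]; ring

theorem stmt_0_general (lam Δt : ℝ) (hlam : 0 < lam)
    (s : ℝ) (hs : s = Δt ^ 2 / 2)
    (G : Matrix (Fin 2) (Fin 2) ℂ)
    (hG : G = !![0, 1;
      (((2 + lam * s) / (lam * s - Δt ^ 2 * lam - 2) : ℝ) : ℂ),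
      (((Δt ^ 2 * lam - 4) / (lam * s - Δt ^ 2 * lam - 2) : ℝ) : ℂ)])
    (μp μm : ℂ)
    (hμp : μp = (4 - lam * Δt ^ 2 + 4 * I * Δt * Real.sqrt lam) / (4 + lam * Δt ^ 2))
    (hμm : μm = (4 - lam * Δt ^ 2 - 4 * I * Δt * Real.sqrt lam) / (4 + lam * Δt ^ 2)) :
    (G - μp • (1 : Matrix (Fin 2) (Fin 2) ℂ)).det = 0 ∧
    (G - μm • (1 : Matrix (Fin 2) (Fin 2) ℂ)).det = 0 ∧
    (∀ μ : ℂ, (G - μ • (1 : Matrix (Fin 2) (Fin 2) ℂ)).det = 0 → μ = μp ∨ μ = μm) ∧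
    ‖μp‖ = 1 ∧ ‖μm‖ = 1 := by
  obtain ⟨hc, hb⟩ := dg_matrix_entries (Δt := Δt) hlam.le
  set z : ℂ := 2 + (Δt * √lam : ℝ) * I
  have hμp_cayley : μp = z / conj z := by
    have hsqrt : ((√lam : ℝ) : ℂ) ^ 2 = lam := by rw [← ofReal_pow, Real.sq_sqrt hlam.le]
    rw [hμp, two_add_mul_I_div_conj, ofReal_mul, mul_pow, hsqrt]
    ring
  have hμm_conj : μm = conj μp := by
    rw [hμm, hμp]
    simp [map_div₀, map_ofNat, sub_eq_add_neg]
  have hnorm : ‖μp‖ = 1 := by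
    rw [hμp_cayley]
    exact norm_div_conj_self fun h => by simpa [z] using congrArg re h
  have hprod : μp * μm = 1 := by rw [hμm_conj, mul_conj', hnorm]; simp
  have hsum : μp + μm = ((2 * (4 - lam * Δt ^ 2) / (4 + lam * Δt ^ 2) : ℝ) : ℂ) := by
    rw [hμp, hμm]; push_cast; ring
  have hG' : G = !![0, 1; -(μp * μm), μp + μm] := by
    rw [hG, hs, hc, hb, hprod, hsum]; push_cast; rfl
  subst hG'
  exact ⟨det_companion_sub_smul_one_eq_zero_iff.2 (.inl rfl),
    det_companion_sub_smul_one_eq_zero_iff.2 (.inr rfl),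
    fun _ => det_companion_sub_smul_one_eq_zero_iff.1, hnorm, by rw [hμm_conj, norm_conj, hnorm]⟩

/-- eigenvalues of the P¹-DG time-stepping matrix with s = Δt²/2. -/
theorem stmt_0 (lam Δt : ℝ) (hlam : 0 < lam) (hΔt : 0 < Δt)
    (s : ℝ) (hs : s = Δt ^ 2 / 2)
    (G : Matrix (Fin 2) (Fin 2) ℂ)
    (hG : G = !![0, 1;
      (((2 + lam * s) / (lam * s - Δt ^ 2 * lam - 2) : ℝ) : ℂ),
      (((Δt ^ 2 * lam - 4) / (lam * s - Δt ^ 2 * lam - 2) : ℝ) : ℂ)])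
    (μp μm : ℂ)
    (hμp : μp = (4 - lam * Δt ^ 2 + 4 * I * Δt * Real.sqrt lam) / (4 + lam * Δt ^ 2))
    (hμm : μm = (4 - lam * Δt ^ 2 - 4 * I * Δt * Real.sqrt lam) / (4 + lam * Δt ^ 2)) :
    (G - μp • (1 : Matrix (Fin 2) (Fin 2) ℂ)).det = 0 ∧
    (G - μm • (1 : Matrix (Fin 2) (Fin 2) ℂ)).det = 0 ∧
    (∀ μ : ℂ, (G - μ • (1 : Matrix (Fin 2) (Fin 2) ℂ)).det = 0 → μ = μp ∨ μ = μm) ∧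
    ‖μp‖ = 1 ∧ ‖μm‖ = 1 :=
  stmt_0_general lam Δt hlam s hs G hG μp μm hμp hμm
end

section
/- Let λ > 0, Δt > 0 and set x = Δt√λ. Define the 2×2 real matrix G with rows [0, 1] and [2/(-Δt²λ - 2), (Δt²λ - 4)/(-Δt²λ - 2)]. Then the spectral radius of G is strictly less than 1. -/
/-!
The characteristic polynomial of `G` is, up to the factor `y + 2` with `y = Δt²λ`,
`(y + 2) μ² + (y - 4) μ + 2`. Its monic form `μ² + p μ + q` satisfies the Schur–Cohn
conditions `q < 1` and `|p| < 1 + q` as soon as `y > 0`, and these force both roots into the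
open unit disc: a non-real root has `|μ|² = q`, and a real root lies strictly between `-1` and `1`
because the polynomial is positive at `±1` while the product of the roots is `q < 1`.
-/

open Matrix Complex

lemma det_companion_sub_smul_one (b c μ : ℂ) :
    (!![0, 1; b, c] - μ • (1 : Matrix (Fin 2) (Fin 2) ℂ)).det = μ ^ 2 - c * μ - b := by
  simp only [det_fin_two, Fin.isValue, Matrix.sub_apply, of_apply, cons_val', cons_val_zero,
    cons_val_fin_one, cons_val_one, Matrix.smul_apply, one_apply_eq, one_apply_ne, ne_eq,
    zero_ne_one, one_ne_zero, not_false_eq_true, smul_eq_mul, mul_one, mul_zero, sub_zero]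
  ring

lemma abs_lt_one_of_quadratic_eq_zero {p q a : ℝ} (hq : q < 1) (hp : |p| < 1 + q)
    (ha : a ^ 2 + p * a + q = 0) : |a| < 1 := by
  rw [abs_lt] at hp ⊢
  constructor <;> nlinarith

lemma norm_lt_one_of_quadratic_eq_zero {p q : ℝ} (hq : q < 1) (hp : |p| < 1 + q) {z : ℂ}
    (hz : z ^ 2 + p * z + q = 0) : ‖z‖ < 1 := by
  have hre : z.re ^ 2 - z.im ^ 2 + p * z.re + q = 0 := by
    simpa [sq] using congrArg Complex.re hz
  have him : z.im * (2 * z.re + p) = 0 := by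
    have him' := congrArg Complex.im hz
    simp only [sq, add_im, mul_im, ofReal_re, ofReal_im, zero_mul, add_zero, zero_im] at him'
    linear_combination him'
  rcases mul_eq_zero.1 him with hreal | hsum
  · have : |z.re| < 1 := abs_lt_one_of_quadratic_eq_zero hq hp (by simpa [hreal] using hre)
    rwa [← Complex.re_add_im z, hreal, ofReal_zero, zero_mul, add_zero, norm_real, Real.norm_eq_abs]
  · have hnormSq : normSq z = q := by
      rw [normSq_apply]; linear_combination (-1) * hre + z.re * hsum
    rw [← sq_lt_one_iff₀ (norm_nonneg z), ← normSq_eq_norm_sq, hnormSq]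
    exact hq

/-- spectral radius of the P¹-DG matrix with s = 0 is < 1. -/
theorem stmt_1 (lam Δt : ℝ) (hlam : 0 < lam) (hΔt : 0 < Δt)
    (G : Matrix (Fin 2) (Fin 2) ℂ)
    (hG : G = !![0, 1;
      (((2) / (-(Δt ^ 2 * lam) - 2) : ℝ) : ℂ),
      (((Δt ^ 2 * lam - 4) / (-(Δt ^ 2 * lam) - 2) : ℝ) : ℂ)]) :
    ∀ μ : ℂ, (G - μ • (1 : Matrix (Fin 2) (Fin 2) ℂ)).det = 0 → ‖μ‖ < 1 := by
  intro μ hdet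
  set y := Δt ^ 2 * lam
  have hy : 0 < y := by positivity
  have hq : 2 / (y + 2) < 1 := by rw [div_lt_one (by positivity)]; linarith
  have hp : |(y - 4) / (y + 2)| < 1 + 2 / (y + 2) := by
    have h1q : 1 + 2 / (y + 2) = (y + 4) / (y + 2) := by field_simp; ring
    rw [h1q, abs_div, abs_of_pos (by positivity : 0 < y + 2),
      div_lt_div_iff_of_pos_right (by positivity), abs_lt]
    constructor <;> linarith
  refine norm_lt_one_of_quadratic_eq_zero hq hp ?_
  have hden : -y - 2 = -(y + 2) := by ring
  rw [hG, det_companion_sub_smul_one, hden, div_neg, div_neg] at hdet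
  push_cast at hdet ⊢
  linear_combination hdet
end

section
/- Let λ > 0, Δt > 0, and set x = Δt√λ. If a ∈ (1/2 - 2/x, 1/2), then the two eigenvalues of the 2×2 matrix G with rows [0,1] and [(2+aΔt²λ)/(aΔt²λ - Δt²λ - 2), (Δt²λ-4)/(aΔt²λ - Δt²λ - 2)] are complex conjugates with modulus strictly less than 1; if a ∈ (1/2, 1/2 + 2/x), their modulus is strictly greater than 1. -/
/-!
The characteristic polynomial of `G` is `μ² - qμ - p` with real `p, q`. When its discriminant
`q² + 4p` is negative the roots are a non-real conjugate pair, so `|μ|² = μ μ̄ = -p`. With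
`y = Δt²λ` and `D = ay - y - 2 < 0` one has `-p - 1 = y(1 - 2a)/D`, whose sign is that of `a - 1/2`.
-/

open Matrix Complex

open ComplexConjugate

theorem det_of_fin_two_sub_smul_one {R : Type*} [CommRing R] (p q μ : R) :
    (!![0, 1; p, q] - μ • (1 : Matrix (Fin 2) (Fin 2) R)).det = μ ^ 2 - q * μ - p := by
  rw [smul_one_eq_diagonal, diagonal_fin_two]
  simp only [of_sub_of, sub_cons, head_cons, tail_cons, zero_sub, sub_zero, sub_self, zero_empty,
    det_fin_two_of]
  ring

section QuadraticRoot

variable {p q : ℝ} {μ : ℂ}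

theorem conj_root_of_real_quadratic (hμ : μ ^ 2 - q * μ - p = 0) :
    conj μ ^ 2 - q * conj μ - p = 0 := by
  simpa using congrArg conj hμ

theorem im_ne_zero_of_real_quadratic (hdisc : q ^ 2 + 4 * p < 0)
    (hμ : μ ^ 2 - q * μ - p = 0) : μ.im ≠ 0 := by
  intro him
  have hre : μ.re ^ 2 - q * μ.re - p = 0 := by
    rw [← Complex.re_add_im μ, him] at hμ
    exact_mod_cast (by simpa using hμ : ((μ.re ^ 2 - q * μ.re - p : ℝ) : ℂ) = 0)
  nlinarith [sq_nonneg (2 * μ.re - q)]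

/-- Vieta for the conjugate pair: `μ + μ̄ = q`, hence `μ μ̄ = qμ - μ² = -p`. -/
theorem norm_sq_eq_neg_of_real_quadratic (hdisc : q ^ 2 + 4 * p < 0)
    (hμ : μ ^ 2 - q * μ - p = 0) : ‖μ‖ ^ 2 = -p := by
  have hconj := conj_root_of_real_quadratic hμ
  have hne : μ - conj μ ≠ 0 := sub_ne_zero.2 fun h =>
    im_ne_zero_of_real_quadratic hdisc hμ (Complex.conj_eq_iff_im.1 h.symm)
  have hsum : μ + conj μ = q := by
    have h : (μ - conj μ) * (μ + conj μ - q) = 0 := by linear_combination hμ - hconj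
    exact sub_eq_zero.mp ((mul_eq_zero.mp h).resolve_left hne)
  have hprod : μ * conj μ = -p := by linear_combination μ * hsum - hμ
  exact_mod_cast (Complex.mul_conj' μ).symm.trans hprod

end QuadraticRoot

namespace StabilizedDG

variable {a y : ℝ}

theorem sq_two_mul_sub_one_mul_sq_lt {x : ℝ} (hx : 0 < x)
    (ha : a ∈ Set.Ioo (1 / 2 - 2 / x) (1 / 2 + 2 / x)) : (2 * a - 1) ^ 2 * x ^ 2 < 16 := by
  have h2x : 2 / x * x = 2 := div_mul_cancel₀ 2 hx.ne'
  have hlo := mul_lt_mul_of_pos_right ha.1 hx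
  have hhi := mul_lt_mul_of_pos_right ha.2 hx
  rw [← mul_pow]
  exact (sq_lt_sq' (b := 4) (by nlinarith) (by nlinarith)).trans_eq (by norm_num)

/-- `(2a - 3)² ≥ 0` is `8(a - 1) ≤ (2a - 1)²`, so `(a - 1) y < 2` whenever `(2a - 1)² y < 16`. -/
theorem denom_neg (hy : 0 < y) (h : (2 * a - 1) ^ 2 * y < 16) : a * y - y - 2 < 0 := by
  nlinarith [sq_nonneg (2 * a - 3), mul_pos hy hy]

theorem discrim_neg_of_sq_mul_lt (hy : 0 < y) (h : (2 * a - 1) ^ 2 * y < 16) :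
    ((y - 4) / (a * y - y - 2)) ^ 2 + 4 * ((2 + a * y) / (a * y - y - 2)) < 0 := by
  have hD := denom_neg hy h
  have hdisc : ((y - 4) / (a * y - y - 2)) ^ 2 + 4 * ((2 + a * y) / (a * y - y - 2))
      = y * ((2 * a - 1) ^ 2 * y - 16) / (a * y - y - 2) ^ 2 := by
    field_simp
    ring
  rw [hdisc]
  exact div_neg_of_neg_of_pos (mul_neg_of_pos_of_neg hy (by linarith)) (sq_pos_of_neg hD)

theorem neg_coeff_sub_one (hy : 0 < y) (h : (2 * a - 1) ^ 2 * y < 16) :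
    -((2 + a * y) / (a * y - y - 2)) - 1 = y * (1 - 2 * a) / (a * y - y - 2) := by
  have hD := (denom_neg hy h).ne
  rw [eq_div_iff hD, sub_mul, neg_mul, div_mul_cancel₀ _ hD]
  ring

theorem neg_coeff_lt_one (hy : 0 < y) (h : (2 * a - 1) ^ 2 * y < 16) (ha : a < 1 / 2) :
    -((2 + a * y) / (a * y - y - 2)) < 1 := by
  have := div_neg_of_pos_of_neg (mul_pos hy (by linarith : 0 < 1 - 2 * a)) (denom_neg hy h)
  linarith [neg_coeff_sub_one hy h]

theorem one_lt_neg_coeff (hy : 0 < y) (h : (2 * a - 1) ^ 2 * y < 16) (ha : 1 / 2 < a) :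
    1 < -((2 + a * y) / (a * y - y - 2)) := by
  have := div_pos_of_neg_of_neg (mul_neg_of_pos_of_neg hy (by linarith : 1 - 2 * a < 0))
    (denom_neg hy h)
  linarith [neg_coeff_sub_one hy h]

end StabilizedDG

open StabilizedDG

/-- eigenvalues of the P¹-DG matrix with stabilization s = aΔt². -/
theorem stmt_2 (lam Δt a : ℝ) (hlam : 0 < lam) (hΔt : 0 < Δt)
    (x : ℝ) (hx : x = Δt * Real.sqrt lam)
    (G : Matrix (Fin 2) (Fin 2) ℂ)
    (hG : G = !![0, 1;
      (((2 + a * Δt ^ 2 * lam) / (a * Δt ^ 2 * lam - Δt ^ 2 * lam - 2) : ℝ) : ℂ),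
      (((Δt ^ 2 * lam - 4) / (a * Δt ^ 2 * lam - Δt ^ 2 * lam - 2) : ℝ) : ℂ)]) :
    (a ∈ Set.Ioo (1 / 2 - 2 / x) (1 / 2) →
      ∀ μ : ℂ, (G - μ • (1 : Matrix (Fin 2) (Fin 2) ℂ)).det = 0 →
        (G - (starRingEnd ℂ) μ • (1 : Matrix (Fin 2) (Fin 2) ℂ)).det = 0 ∧
        ‖μ‖ < 1) ∧
    (a ∈ Set.Ioo (1 / 2) (1 / 2 + 2 / x) →
      ∀ μ : ℂ, (G - μ • (1 : Matrix (Fin 2) (Fin 2) ℂ)).det = 0 →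
        (G - (starRingEnd ℂ) μ • (1 : Matrix (Fin 2) (Fin 2) ℂ)).det = 0 ∧
        1 < ‖μ‖) := by
  have hxpos : 0 < x := hx ▸ by positivity
  have hxy : Δt ^ 2 * lam = x ^ 2 := by rw [hx, mul_pow, Real.sq_sqrt hlam.le]
  simp only [mul_assoc, hxy] at hG
  subst hG
  simp only [det_of_fin_two_sub_smul_one]
  have h2x : 0 < 2 / x := by positivity
  have hsq (ha : a ∈ Set.Ioo (1 / 2 - 2 / x) (1 / 2 + 2 / x)) :=
    sq_two_mul_sub_one_mul_sq_lt hxpos ha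
  have hy : 0 < x ^ 2 := by positivity
  refine ⟨fun ⟨hlo, hhi⟩ μ hμ => ⟨conj_root_of_real_quadratic hμ, ?_⟩,
    fun ⟨hlo, hhi⟩ μ hμ => ⟨conj_root_of_real_quadratic hμ, ?_⟩⟩
  · have ha := hsq ⟨hlo, by linarith⟩
    rw [← sq_lt_one_iff₀ (norm_nonneg μ),
      norm_sq_eq_neg_of_real_quadratic (discrim_neg_of_sq_mul_lt hy ha) hμ]
    exact neg_coeff_lt_one hy ha hhi
  · have ha := hsq ⟨by linarith, hhi⟩
    rw [← one_lt_sq_iff₀ (norm_nonneg μ),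
      norm_sq_eq_neg_of_real_quadratic (discrim_neg_of_sq_mul_lt hy ha) hμ]
    exact one_lt_neg_coeff hy ha hlo
end

section
/- Let λ > 0, Δt > 0 and a ∈ ℝ. The P¹-DG recurrence w_{n+1} - 2w_n + w_{n-1} + λΔt²((1-a)/2 · w_{n+1} + 1/2 · w_n + a/2 · w_{n-1}) = 0 coincides with the eliminated Newmark recurrence u_{n+1} - 2u_n + u_{n-1} + λΔt²(β u_{n+1} + (1/2 - 2β + γ)u_n + (1/2 + β - γ)u_{n-1}) = 0 if and only if β = (1-a)/2 and γ = 1 - a. -/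
/-- the P¹-DG recurrence coincides with the eliminated Newmark recurrence
iff β = (1-a)/2 and γ = 1-a, where "coincides" means the coefficients of the three
terms agree for all λ, Δt > 0. -/
theorem stmt_6 (a β γ : ℝ) :
    (∀ lam Δt : ℝ, 0 < lam → 0 < Δt →
      (1 + lam * Δt ^ 2 * ((1 - a) / 2) = 1 + lam * Δt ^ 2 * β ∧
       -2 + lam * Δt ^ 2 * (1 / 2) = -2 + lam * Δt ^ 2 * (1 / 2 - 2 * β + γ) ∧
       1 + lam * Δt ^ 2 * (a / 2) = 1 + lam * Δt ^ 2 * (1 / 2 + β - γ))) ↔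
    (β = (1 - a) / 2 ∧ γ = 1 - a) := by
  constructor
  · intro h
    obtain ⟨h1, h2, h3⟩ := h 1 1 one_pos one_pos
    constructor <;> nlinarith [h1, h2, h3]
  · rintro ⟨hb, hg⟩ lam Δt _ _
    subst hb hg
    refine ⟨rfl, by ring_nf, by ring_nf⟩
end

section
/- Let λ > 0 and Δt > 0, and set x = Δt√λ. For the P¹-DG matrix G with a = 0, assume x > 4 so that the eigenvalues are real. Then the squared spectral radius ρ(G)² = ((x√(x²-16) + x² - 4)/(2x² + 4))² satisfies ρ(G)² = 1/9 at x = 4, is strictly increasing for x > 4, and tends to 1 as x → ∞; in particular ρ(G) < 1 for all x > 4. -/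
/-!
Rationalising with the conjugate `x² + 8 - x√(x² - 16)` turns the spectral radius into
`ρ(x) = 1 - 16 / (x² + 8 + x√(x² - 16))` for `x ≥ 4`. The denominator is positive, strictly
increasing on `[4, ∞)` and at least `x²`, so `ρ` increases strictly from `ρ(4) = 1/3`
towards `1` and stays below `1`; squaring preserves all of this because `ρ ≥ 0` there.
-/

open Filter Set

noncomputable def dgSpectralRadius (x : ℝ) : ℝ :=
  (x * √(x ^ 2 - 16) + x ^ 2 - 4) / (2 * x ^ 2 + 4)

noncomputable def dgConjugateDenom (x : ℝ) : ℝ :=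
  x ^ 2 + 8 + x * √(x ^ 2 - 16)

lemma sq_le_dgConjugateDenom {x : ℝ} (hx : 0 ≤ x) : x ^ 2 ≤ dgConjugateDenom x := by
  have : 0 ≤ x * √(x ^ 2 - 16) := mul_nonneg hx (Real.sqrt_nonneg _)
  unfold dgConjugateDenom
  linarith

lemma dgConjugateDenom_pos {x : ℝ} (hx : 0 ≤ x) : 0 < dgConjugateDenom x := by
  have : 0 ≤ x * √(x ^ 2 - 16) := mul_nonneg hx (Real.sqrt_nonneg _)
  unfold dgConjugateDenom
  positivity

lemma dgConjugateDenom_strictMonoOn : StrictMonoOn dgConjugateDenom (Ici 4) := by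
  intro a (ha : 4 ≤ a) b (hb : 4 ≤ b) hab
  have hsq : a ^ 2 < b ^ 2 := pow_lt_pow_left₀ hab (by linarith) two_ne_zero
  have hsqrt : √(a ^ 2 - 16) ≤ √(b ^ 2 - 16) := Real.sqrt_le_sqrt (by linarith)
  have hprod : a * √(a ^ 2 - 16) ≤ b * √(b ^ 2 - 16) :=
    mul_le_mul hab.le hsqrt (Real.sqrt_nonneg _) (by linarith)
  unfold dgConjugateDenom
  linarith

lemma dgSpectralRadius_eq_one_sub {x : ℝ} (hx : 4 ≤ x) :
    dgSpectralRadius x = 1 - 16 / dgConjugateDenom x := by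
  have hs : √(x ^ 2 - 16) ^ 2 = x ^ 2 - 16 := Real.sq_sqrt (by nlinarith)
  have hD : dgConjugateDenom x ≠ 0 := (dgConjugateDenom_pos (by linarith)).ne'
  unfold dgSpectralRadius
  rw [eq_sub_iff_add_eq, div_add_div _ _ (by positivity) hD, div_eq_one_iff_eq (by positivity)]
  unfold dgConjugateDenom
  linear_combination x ^ 2 * hs

lemma dgSpectralRadius_nonneg {x : ℝ} (hx : 2 ≤ x) : 0 ≤ dgSpectralRadius x := by
  have : 0 ≤ x * √(x ^ 2 - 16) := mul_nonneg (by linarith) (Real.sqrt_nonneg _)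
  unfold dgSpectralRadius
  apply div_nonneg <;> nlinarith

lemma dgSpectralRadius_lt_one {x : ℝ} (hx : 4 ≤ x) : dgSpectralRadius x < 1 := by
  rw [dgSpectralRadius_eq_one_sub hx, sub_lt_self_iff]
  exact div_pos (by norm_num) (dgConjugateDenom_pos (by linarith))

lemma dgSpectralRadius_strictMonoOn : StrictMonoOn dgSpectralRadius (Ici 4) := by
  intro a (ha : 4 ≤ a) b (hb : 4 ≤ b) hab
  rw [dgSpectralRadius_eq_one_sub ha, dgSpectralRadius_eq_one_sub hb, sub_lt_sub_iff_left]
  exact div_lt_div_of_pos_left (by norm_num) (dgConjugateDenom_pos (by linarith))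
    (dgConjugateDenom_strictMonoOn ha hb hab)

lemma tendsto_dgSpectralRadius_atTop : Tendsto dgSpectralRadius atTop (nhds 1) := by
  have hD : Tendsto dgConjugateDenom atTop atTop :=
    tendsto_atTop_mono' _ ((eventually_ge_atTop 0).mono fun _ hx => sq_le_dgConjugateDenom hx)
      (tendsto_pow_atTop two_ne_zero)
  have hlim : Tendsto (fun x => 1 - 16 / dgConjugateDenom x) atTop (nhds (1 - 0)) :=
    tendsto_const_nhds.sub (hD.const_div_atTop 16)
  rw [sub_zero] at hlim
  exact hlim.congr'
    ((eventually_ge_atTop 4).mono fun _ hx => (dgSpectralRadius_eq_one_sub hx).symm)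

/-- behaviour of the squared spectral radius of the P¹-DG matrix
(a = 0) in the real-eigenvalue regime x = Δt√λ > 4. -/
theorem stmt_9 (f : ℝ → ℝ)
    (hf : f = fun x => ((x * Real.sqrt (x ^ 2 - 16) + x ^ 2 - 4) / (2 * x ^ 2 + 4)) ^ 2) :
    f 4 = 1 / 9 ∧
    StrictMonoOn f (Set.Ici 4) ∧
    Tendsto f atTop (nhds 1) ∧
    (∀ x : ℝ, 4 < x → f x < 1) := by
  obtain rfl : f = fun x => dgSpectralRadius x ^ 2 := hf
  refine ⟨by norm_num [dgSpectralRadius], ?_,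
    by simpa using tendsto_dgSpectralRadius_atTop.pow 2, ?_⟩
  · exact (pow_left_strictMonoOn₀ two_ne_zero).comp dgSpectralRadius_strictMonoOn
      fun x (hx : 4 ≤ x) => dgSpectralRadius_nonneg (by linarith)
  · intro x hx
    exact pow_lt_one₀ (dgSpectralRadius_nonneg (by linarith)) (dgSpectralRadius_lt_one hx.le)
      two_ne_zero
end

section
/- For 0 < x ≤ 4 with x ≠ values making the matrix singular, the eigenvalues λ_{1,2} = (±x√(x² - 16) + x - 4)/(-2x - 4) of the P¹-DG matrix (a = 0) are complex conjugates, and |λ_{1,2}| < 1 if and only if -4x⁴ - 8x² < 0, which holds for all x > 0. -/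
/-! The squared modulus of the eigenvalues is `((x - 4)² + x² (16 - x²)) / (2x + 4)²`, which is
`< 1` since `(2x + 4)² - (x - 4)² - x² (16 - x²) = x (x³ - 13x + 24)` and the cubic is positive
for `x > 0`. Both sides of the equivalence are therefore true. -/

open Complex

section Eigenvalues

variable (x s : ℝ)

lemma conj_eigenvalue :
    (-((x : ℂ) * (I * (s : ℂ))) + x - 4) / (-2 * x - 4) =
      starRingEnd ℂ (((x : ℂ) * (I * (s : ℂ)) + x - 4) / (-2 * x - 4)) := by
  simp [map_div₀, map_ofNat]

lemma norm_eigenvalue_sq :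
    ‖((x : ℂ) * (I * (s : ℂ)) + x - 4) / (-2 * x - 4)‖ ^ 2 =
      ((x - 4) ^ 2 + x ^ 2 * s ^ 2) / (2 * x + 4) ^ 2 := by
  have hnum : (x : ℂ) * (I * (s : ℂ)) + x - 4 = ((x - 4 : ℝ) : ℂ) + ((x * s : ℝ) : ℂ) * I := by
    push_cast; ring
  have hden : (-2 * x - 4 : ℂ) = ((-2 * x - 4 : ℝ) : ℂ) := by push_cast; ring
  rw [hnum, hden, Complex.sq_norm, Complex.normSq_div, Complex.normSq_add_mul_I,
    Complex.normSq_ofReal]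
  ring

end Eigenvalues

lemma norm_eigenvalue_lt_one {x : ℝ} (hx0 : 0 < x) (hx4 : x ≤ 4) :
    ‖((x : ℂ) * (I * (Real.sqrt (16 - x ^ 2) : ℝ)) + x - 4) / (-2 * x - 4)‖ < 1 := by
  have hs : Real.sqrt (16 - x ^ 2) ^ 2 = 16 - x ^ 2 := Real.sq_sqrt (by nlinarith)
  have hcubic : 0 < x ^ 3 - 13 * x + 24 := by
    nlinarith [sq_nonneg (x - 2), sq_nonneg (x - 3), sq_nonneg (x - 1)]
  have hgap : (2 * x + 4) ^ 2 - ((x - 4) ^ 2 + x ^ 2 * (16 - x ^ 2)) =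
      x * (x ^ 3 - 13 * x + 24) := by ring
  have hsq : ‖((x : ℂ) * (I * (Real.sqrt (16 - x ^ 2) : ℝ)) + x - 4) / (-2 * x - 4)‖ ^ 2 < 1 := by
    rw [norm_eigenvalue_sq, hs, div_lt_one (by positivity)]
    nlinarith [mul_pos hx0 hcubic]
  exact (sq_lt_one_iff₀ (norm_nonneg _)).mp hsq

/-- for 0 < x ≤ 4 the eigenvalues λ₁,₂ = (±x√(x²-16) + x - 4)/(-2x-4)
(with √(x²-16) = i√(16-x²)) are complex conjugates, and |λ₁,₂| < 1 iff
-4x⁴ - 8x² < 0, which holds for all x > 0. -/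
theorem stmt_10 (x : ℝ) (hx0 : 0 < x) (hx4 : x ≤ 4)
    (μ₁ μ₂ : ℂ)
    (hμ₁ : μ₁ = ((x : ℂ) * (Complex.I * (Real.sqrt (16 - x ^ 2) : ℝ)) + x - 4) / (-2 * x - 4))
    (hμ₂ : μ₂ = (-((x : ℂ) * (Complex.I * (Real.sqrt (16 - x ^ 2) : ℝ))) + x - 4) / (-2 * x - 4)) :
    μ₂ = (starRingEnd ℂ) μ₁ ∧
    ‖μ₂‖ = ‖μ₁‖ ∧
    (‖μ₁‖ < 1 ↔ -4 * x ^ 4 - 8 * x ^ 2 < 0) ∧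
    (∀ y : ℝ, 0 < y → -4 * y ^ 4 - 8 * y ^ 2 < 0) := by
  have hconj : μ₂ = starRingEnd ℂ μ₁ := by rw [hμ₁, hμ₂, conj_eigenvalue]
  have hneg : ∀ y : ℝ, 0 < y → -4 * y ^ 4 - 8 * y ^ 2 < 0 := fun y hy => by nlinarith [pow_pos hy 4]
  refine ⟨hconj, by rw [hconj, Complex.norm_conj], ?_, hneg⟩
  exact iff_of_true (hμ₁ ▸ norm_eigenvalue_lt_one hx0 hx4) (hneg x hx0)
end

section
/- Let λ > 0, Δt > 0 and set x = Δt√λ. For the P²-DG scheme with a = 0, if x⁶ - 144x⁴ + 3456x² - 20736 ≤ 0, then the two nonzero eigenvalues λ_{1,2} = (-x⁴ + 60x² - 144 ± x√(x⁶ - 144x⁴ + 3456x² - 20736))/(-2x⁴ - 12x² - 144) are complex conjugates of equal modulus, and this modulus is at most 1; equivalently |λ_{1,2}| ≤ 1 iff -4x⁸ - 24x⁶ - 288x⁴ ≤ 0, which holds for all x ≥ 0. -/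
/-!
The discriminant condition makes the square root exact, so the eigenvalues are `(A ± i x s) / D`
with real `A`, `s`, `D`: they are conjugate, and `|λ|² = (A² + x² s²) / D²`. Substituting
`s² = -(x⁶ - 144x⁴ + 3456x² - 20736)` gives `A² + x² s² - D² = -4x⁸ - 24x⁶ - 288x⁴`, which is
never positive, so `|λ| ≤ 1`.
-/

open Complex

namespace Complex

lemma conj_add_mul_I_div_ofReal (a b d : ℝ) :
    starRingEnd ℂ ((a + b * I) / d) = (a - b * I) / d := by
  simp only [map_div₀, map_add, map_mul, conj_ofReal, conj_I]
  ring

lemma sq_norm_add_mul_I_div_ofReal (a b d : ℝ) :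
    ‖((a : ℂ) + b * I) / d‖ ^ 2 = (a ^ 2 + b ^ 2) / d ^ 2 := by
  rw [Complex.sq_norm, normSq_div, normSq_add_mul_I, normSq_ofReal, ← sq]

lemma norm_add_mul_I_div_ofReal_le_one_iff {a b d : ℝ} (hd : d ≠ 0) :
    ‖((a : ℂ) + b * I) / d‖ ≤ 1 ↔ a ^ 2 + b ^ 2 - d ^ 2 ≤ 0 := by
  rw [← pow_le_one_iff_of_nonneg (norm_nonneg _) two_ne_zero, sq_norm_add_mul_I_div_ofReal,
    div_le_one (by positivity), sub_nonpos]

end Complex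

lemma dg_denominator_ne_zero (x : ℝ) : -2 * x ^ 4 - 12 * x ^ 2 - 144 ≠ 0 := by
  nlinarith [sq_nonneg (x ^ 2), sq_nonneg x]

lemma dg_modulus_defect {x s : ℝ} (hs : s ^ 2 = -(x ^ 6 - 144 * x ^ 4 + 3456 * x ^ 2 - 20736)) :
    (-(x ^ 4) + 60 * x ^ 2 - 144) ^ 2 + (x * s) ^ 2 - (-2 * x ^ 4 - 12 * x ^ 2 - 144) ^ 2
      = -4 * x ^ 8 - 24 * x ^ 6 - 288 * x ^ 4 := by
  rw [mul_pow, hs]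
  ring

lemma dg_modulus_defect_nonpos (y : ℝ) : -4 * y ^ 8 - 24 * y ^ 6 - 288 * y ^ 4 ≤ 0 := by
  nlinarith [pow_two_nonneg (y ^ 4), pow_two_nonneg (y ^ 3), pow_two_nonneg (y ^ 2)]

theorem stmt_11_general
    (x : ℝ)
    (hdisc : x ^ 6 - 144 * x ^ 4 + 3456 * x ^ 2 - 20736 ≤ 0)
    (μ₁ μ₂ : ℂ)
    (hμ₁ : μ₁ = (((-(x ^ 4) + 60 * x ^ 2 - 144 : ℝ) : ℂ)
        + (x : ℂ) * (Complex.I *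
          ((Real.sqrt (-(x ^ 6 - 144 * x ^ 4 + 3456 * x ^ 2 - 20736)) : ℝ) : ℂ)))
        / ((-2 * x ^ 4 - 12 * x ^ 2 - 144 : ℝ) : ℂ))
    (hμ₂ : μ₂ = (((-(x ^ 4) + 60 * x ^ 2 - 144 : ℝ) : ℂ)
        - (x : ℂ) * (Complex.I *
          ((Real.sqrt (-(x ^ 6 - 144 * x ^ 4 + 3456 * x ^ 2 - 20736)) : ℝ) : ℂ)))
        / ((-2 * x ^ 4 - 12 * x ^ 2 - 144 : ℝ) : ℂ)) :
    μ₂ = (starRingEnd ℂ) μ₁ ∧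
    ‖μ₂‖ = ‖μ₁‖ ∧
    ‖μ₁‖ ≤ 1 ∧
    (‖μ₁‖ ≤ 1 ↔ -4 * x ^ 8 - 24 * x ^ 6 - 288 * x ^ 4 ≤ 0) ∧
    (∀ y : ℝ, 0 ≤ y → -4 * y ^ 8 - 24 * y ^ 6 - 288 * y ^ 4 ≤ 0) := by
  set s := Real.sqrt (-(x ^ 6 - 144 * x ^ 4 + 3456 * x ^ 2 - 20736))
  have hs : s ^ 2 = -(x ^ 6 - 144 * x ^ 4 + 3456 * x ^ 2 - 20736) := Real.sq_sqrt (by linarith)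
  have hμ₁' : μ₁ = ((-(x ^ 4) + 60 * x ^ 2 - 144 : ℝ) + (x * s : ℝ) * I)
      / (-2 * x ^ 4 - 12 * x ^ 2 - 144 : ℝ) := by
    rw [hμ₁]; push_cast; ring
  have hconj : μ₂ = starRingEnd ℂ μ₁ := by
    rw [hμ₁', conj_add_mul_I_div_ofReal, hμ₂]; push_cast; ring
  have hiff : ‖μ₁‖ ≤ 1 ↔ -4 * x ^ 8 - 24 * x ^ 6 - 288 * x ^ 4 ≤ 0 := by
    rw [hμ₁', norm_add_mul_I_div_ofReal_le_one_iff (dg_denominator_ne_zero x), dg_modulus_defect hs]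
  exact ⟨hconj, by rw [hconj, norm_conj], hiff.mpr (dg_modulus_defect_nonpos x), hiff,
    fun y _ ↦ dg_modulus_defect_nonpos y⟩

/-- the two nonzero eigenvalues of the P²-DG time-stepping matrix
(a = 0) are complex conjugates of equal modulus at most 1, with
|λ₁,₂| ≤ 1 iff -4x⁸ - 24x⁶ - 288x⁴ ≤ 0, which holds for all x ≥ 0. -/
theorem stmt_11 (lam Δt : ℝ) (hlam : 0 < lam) (hΔt : 0 < Δt)
    (x : ℝ) (hx : x = Δt * Real.sqrt lam)
    (hdisc : x ^ 6 - 144 * x ^ 4 + 3456 * x ^ 2 - 20736 ≤ 0)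
    (μ₁ μ₂ : ℂ)
    (hμ₁ : μ₁ = (((-(x ^ 4) + 60 * x ^ 2 - 144 : ℝ) : ℂ)
        + (x : ℂ) * (Complex.I *
          ((Real.sqrt (-(x ^ 6 - 144 * x ^ 4 + 3456 * x ^ 2 - 20736)) : ℝ) : ℂ)))
        / ((-2 * x ^ 4 - 12 * x ^ 2 - 144 : ℝ) : ℂ))
    (hμ₂ : μ₂ = (((-(x ^ 4) + 60 * x ^ 2 - 144 : ℝ) : ℂ)
        - (x : ℂ) * (Complex.I *
          ((Real.sqrt (-(x ^ 6 - 144 * x ^ 4 + 3456 * x ^ 2 - 20736)) : ℝ) : ℂ)))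
        / ((-2 * x ^ 4 - 12 * x ^ 2 - 144 : ℝ) : ℂ)) :
    μ₂ = (starRingEnd ℂ) μ₁ ∧
    ‖μ₂‖ = ‖μ₁‖ ∧
    ‖μ₁‖ ≤ 1 ∧
    (‖μ₁‖ ≤ 1 ↔ -4 * x ^ 8 - 24 * x ^ 6 - 288 * x ^ 4 ≤ 0) ∧
    (∀ y : ℝ, 0 ≤ y → -4 * y ^ 8 - 24 * y ^ 6 - 288 * y ^ 4 ≤ 0) :=
  stmt_11_general x hdisc μ₁ μ₂ hμ₁ hμ₂
end

section
/- Let L = [[0,1],[-λ,0]] with λ > 0 and let A be the 3×3 Butcher matrix of the 3-stage Lobatto IIIC method, A = [[1/6, -1/3, 1/6],[1/6, 5/12, -1/12],[1/6, 2/3, 1/6]]. Then det(I₆ - Δt (A ⊗ L)) = (576 + 36λΔt² + λ³Δt⁶)/576 > 0 for all Δt > 0. -/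
set_option maxRecDepth 10000
set_option maxHeartbeats 4000000

open Matrix Kronecker

section AuxLemmasForStmt13

lemma sa_1_0_0 : Fin.succAbove (0 : Fin 2) (0 : Fin 1) = (1 : Fin 2) := by decide
lemma sa_1_1_0 : Fin.succAbove (1 : Fin 2) (0 : Fin 1) = (0 : Fin 2) := by decide
lemma sa_2_0_0 : Fin.succAbove (0 : Fin 3) (0 : Fin 2) = (1 : Fin 3) := by decide
lemma sa_2_0_1 : Fin.succAbove (0 : Fin 3) (1 : Fin 2) = (2 : Fin 3) := by decide
lemma sa_2_1_0 : Fin.succAbove (1 : Fin 3) (0 : Fin 2) = (0 : Fin 3) := by decide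
lemma sa_2_1_1 : Fin.succAbove (1 : Fin 3) (1 : Fin 2) = (2 : Fin 3) := by decide
lemma sa_2_2_0 : Fin.succAbove (2 : Fin 3) (0 : Fin 2) = (0 : Fin 3) := by decide
lemma sa_2_2_1 : Fin.succAbove (2 : Fin 3) (1 : Fin 2) = (1 : Fin 3) := by decide
lemma sa_3_0_0 : Fin.succAbove (0 : Fin 4) (0 : Fin 3) = (1 : Fin 4) := by decide
lemma sa_3_0_1 : Fin.succAbove (0 : Fin 4) (1 : Fin 3) = (2 : Fin 4) := by decide
lemma sa_3_0_2 : Fin.succAbove (0 : Fin 4) (2 : Fin 3) = (3 : Fin 4) := by decide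
lemma sa_3_1_0 : Fin.succAbove (1 : Fin 4) (0 : Fin 3) = (0 : Fin 4) := by decide
lemma sa_3_1_1 : Fin.succAbove (1 : Fin 4) (1 : Fin 3) = (2 : Fin 4) := by decide
lemma sa_3_1_2 : Fin.succAbove (1 : Fin 4) (2 : Fin 3) = (3 : Fin 4) := by decide
lemma sa_3_2_0 : Fin.succAbove (2 : Fin 4) (0 : Fin 3) = (0 : Fin 4) := by decide
lemma sa_3_2_1 : Fin.succAbove (2 : Fin 4) (1 : Fin 3) = (1 : Fin 4) := by decide
lemma sa_3_2_2 : Fin.succAbove (2 : Fin 4) (2 : Fin 3) = (3 : Fin 4) := by decide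
lemma sa_3_3_0 : Fin.succAbove (3 : Fin 4) (0 : Fin 3) = (0 : Fin 4) := by decide
lemma sa_3_3_1 : Fin.succAbove (3 : Fin 4) (1 : Fin 3) = (1 : Fin 4) := by decide
lemma sa_3_3_2 : Fin.succAbove (3 : Fin 4) (2 : Fin 3) = (2 : Fin 4) := by decide
lemma sa_4_0_0 : Fin.succAbove (0 : Fin 5) (0 : Fin 4) = (1 : Fin 5) := by decide
lemma sa_4_0_1 : Fin.succAbove (0 : Fin 5) (1 : Fin 4) = (2 : Fin 5) := by decide
lemma sa_4_0_2 : Fin.succAbove (0 : Fin 5) (2 : Fin 4) = (3 : Fin 5) := by decide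
lemma sa_4_0_3 : Fin.succAbove (0 : Fin 5) (3 : Fin 4) = (4 : Fin 5) := by decide
lemma sa_4_1_0 : Fin.succAbove (1 : Fin 5) (0 : Fin 4) = (0 : Fin 5) := by decide
lemma sa_4_1_1 : Fin.succAbove (1 : Fin 5) (1 : Fin 4) = (2 : Fin 5) := by decide
lemma sa_4_1_2 : Fin.succAbove (1 : Fin 5) (2 : Fin 4) = (3 : Fin 5) := by decide
lemma sa_4_1_3 : Fin.succAbove (1 : Fin 5) (3 : Fin 4) = (4 : Fin 5) := by decide
lemma sa_4_2_0 : Fin.succAbove (2 : Fin 5) (0 : Fin 4) = (0 : Fin 5) := by decide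
lemma sa_4_2_1 : Fin.succAbove (2 : Fin 5) (1 : Fin 4) = (1 : Fin 5) := by decide
lemma sa_4_2_2 : Fin.succAbove (2 : Fin 5) (2 : Fin 4) = (3 : Fin 5) := by decide
lemma sa_4_2_3 : Fin.succAbove (2 : Fin 5) (3 : Fin 4) = (4 : Fin 5) := by decide
lemma sa_4_3_0 : Fin.succAbove (3 : Fin 5) (0 : Fin 4) = (0 : Fin 5) := by decide
lemma sa_4_3_1 : Fin.succAbove (3 : Fin 5) (1 : Fin 4) = (1 : Fin 5) := by decide
lemma sa_4_3_2 : Fin.succAbove (3 : Fin 5) (2 : Fin 4) = (2 : Fin 5) := by decide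
lemma sa_4_3_3 : Fin.succAbove (3 : Fin 5) (3 : Fin 4) = (4 : Fin 5) := by decide
lemma sa_4_4_0 : Fin.succAbove (4 : Fin 5) (0 : Fin 4) = (0 : Fin 5) := by decide
lemma sa_4_4_1 : Fin.succAbove (4 : Fin 5) (1 : Fin 4) = (1 : Fin 5) := by decide
lemma sa_4_4_2 : Fin.succAbove (4 : Fin 5) (2 : Fin 4) = (2 : Fin 5) := by decide
lemma sa_4_4_3 : Fin.succAbove (4 : Fin 5) (3 : Fin 4) = (3 : Fin 5) := by decide
lemma sa_5_0_0 : Fin.succAbove (0 : Fin 6) (0 : Fin 5) = (1 : Fin 6) := by decide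
lemma sa_5_0_1 : Fin.succAbove (0 : Fin 6) (1 : Fin 5) = (2 : Fin 6) := by decide
lemma sa_5_0_2 : Fin.succAbove (0 : Fin 6) (2 : Fin 5) = (3 : Fin 6) := by decide
lemma sa_5_0_3 : Fin.succAbove (0 : Fin 6) (3 : Fin 5) = (4 : Fin 6) := by decide
lemma sa_5_0_4 : Fin.succAbove (0 : Fin 6) (4 : Fin 5) = (5 : Fin 6) := by decide
lemma sa_5_1_0 : Fin.succAbove (1 : Fin 6) (0 : Fin 5) = (0 : Fin 6) := by decide
lemma sa_5_1_1 : Fin.succAbove (1 : Fin 6) (1 : Fin 5) = (2 : Fin 6) := by decide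
lemma sa_5_1_2 : Fin.succAbove (1 : Fin 6) (2 : Fin 5) = (3 : Fin 6) := by decide
lemma sa_5_1_3 : Fin.succAbove (1 : Fin 6) (3 : Fin 5) = (4 : Fin 6) := by decide
lemma sa_5_1_4 : Fin.succAbove (1 : Fin 6) (4 : Fin 5) = (5 : Fin 6) := by decide
lemma sa_5_2_0 : Fin.succAbove (2 : Fin 6) (0 : Fin 5) = (0 : Fin 6) := by decide
lemma sa_5_2_1 : Fin.succAbove (2 : Fin 6) (1 : Fin 5) = (1 : Fin 6) := by decide
lemma sa_5_2_2 : Fin.succAbove (2 : Fin 6) (2 : Fin 5) = (3 : Fin 6) := by decide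
lemma sa_5_2_3 : Fin.succAbove (2 : Fin 6) (3 : Fin 5) = (4 : Fin 6) := by decide
lemma sa_5_2_4 : Fin.succAbove (2 : Fin 6) (4 : Fin 5) = (5 : Fin 6) := by decide
lemma sa_5_3_0 : Fin.succAbove (3 : Fin 6) (0 : Fin 5) = (0 : Fin 6) := by decide
lemma sa_5_3_1 : Fin.succAbove (3 : Fin 6) (1 : Fin 5) = (1 : Fin 6) := by decide
lemma sa_5_3_2 : Fin.succAbove (3 : Fin 6) (2 : Fin 5) = (2 : Fin 6) := by decide
lemma sa_5_3_3 : Fin.succAbove (3 : Fin 6) (3 : Fin 5) = (4 : Fin 6) := by decide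
lemma sa_5_3_4 : Fin.succAbove (3 : Fin 6) (4 : Fin 5) = (5 : Fin 6) := by decide
lemma sa_5_4_0 : Fin.succAbove (4 : Fin 6) (0 : Fin 5) = (0 : Fin 6) := by decide
lemma sa_5_4_1 : Fin.succAbove (4 : Fin 6) (1 : Fin 5) = (1 : Fin 6) := by decide
lemma sa_5_4_2 : Fin.succAbove (4 : Fin 6) (2 : Fin 5) = (2 : Fin 6) := by decide
lemma sa_5_4_3 : Fin.succAbove (4 : Fin 6) (3 : Fin 5) = (3 : Fin 6) := by decide
lemma sa_5_4_4 : Fin.succAbove (4 : Fin 6) (4 : Fin 5) = (5 : Fin 6) := by decide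
lemma sa_5_5_0 : Fin.succAbove (5 : Fin 6) (0 : Fin 5) = (0 : Fin 6) := by decide
lemma sa_5_5_1 : Fin.succAbove (5 : Fin 6) (1 : Fin 5) = (1 : Fin 6) := by decide
lemma sa_5_5_2 : Fin.succAbove (5 : Fin 6) (2 : Fin 5) = (2 : Fin 6) := by decide
lemma sa_5_5_3 : Fin.succAbove (5 : Fin 6) (3 : Fin 5) = (3 : Fin 6) := by decide
lemma sa_5_5_4 : Fin.succAbove (5 : Fin 6) (4 : Fin 5) = (4 : Fin 6) := by decide
lemma cs_1_0 : Fin.castSucc (0 : Fin 1) = (0 : Fin 2) := by decide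
lemma su_1_0 : Fin.succ (0 : Fin 1) = (1 : Fin 2) := by decide
lemma cs_2_0 : Fin.castSucc (0 : Fin 2) = (0 : Fin 3) := by decide
lemma su_2_0 : Fin.succ (0 : Fin 2) = (1 : Fin 3) := by decide
lemma cs_2_1 : Fin.castSucc (1 : Fin 2) = (1 : Fin 3) := by decide
lemma su_2_1 : Fin.succ (1 : Fin 2) = (2 : Fin 3) := by decide
lemma cs_3_0 : Fin.castSucc (0 : Fin 3) = (0 : Fin 4) := by decide
lemma su_3_0 : Fin.succ (0 : Fin 3) = (1 : Fin 4) := by decide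
lemma cs_3_1 : Fin.castSucc (1 : Fin 3) = (1 : Fin 4) := by decide
lemma su_3_1 : Fin.succ (1 : Fin 3) = (2 : Fin 4) := by decide
lemma cs_3_2 : Fin.castSucc (2 : Fin 3) = (2 : Fin 4) := by decide
lemma su_3_2 : Fin.succ (2 : Fin 3) = (3 : Fin 4) := by decide
lemma cs_4_0 : Fin.castSucc (0 : Fin 4) = (0 : Fin 5) := by decide
lemma su_4_0 : Fin.succ (0 : Fin 4) = (1 : Fin 5) := by decide
lemma cs_4_1 : Fin.castSucc (1 : Fin 4) = (1 : Fin 5) := by decide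
lemma su_4_1 : Fin.succ (1 : Fin 4) = (2 : Fin 5) := by decide
lemma cs_4_2 : Fin.castSucc (2 : Fin 4) = (2 : Fin 5) := by decide
lemma su_4_2 : Fin.succ (2 : Fin 4) = (3 : Fin 5) := by decide
lemma cs_4_3 : Fin.castSucc (3 : Fin 4) = (3 : Fin 5) := by decide
lemma su_4_3 : Fin.succ (3 : Fin 4) = (4 : Fin 5) := by decide
lemma cs_5_0 : Fin.castSucc (0 : Fin 5) = (0 : Fin 6) := by decide
lemma su_5_0 : Fin.succ (0 : Fin 5) = (1 : Fin 6) := by decide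
lemma cs_5_1 : Fin.castSucc (1 : Fin 5) = (1 : Fin 6) := by decide
lemma su_5_1 : Fin.succ (1 : Fin 5) = (2 : Fin 6) := by decide
lemma cs_5_2 : Fin.castSucc (2 : Fin 5) = (2 : Fin 6) := by decide
lemma su_5_2 : Fin.succ (2 : Fin 5) = (3 : Fin 6) := by decide
lemma cs_5_3 : Fin.castSucc (3 : Fin 5) = (3 : Fin 6) := by decide
lemma su_5_3 : Fin.succ (3 : Fin 5) = (4 : Fin 6) := by decide
lemma cs_5_4 : Fin.castSucc (4 : Fin 5) = (4 : Fin 6) := by decide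
lemma su_5_4 : Fin.succ (4 : Fin 5) = (5 : Fin 6) := by decide
lemma w_1_1 {α : Type*} (a : α) (f : Fin 1 → α) : Matrix.vecCons a f (1 : Fin 2) = f (0 : Fin 1) := rfl
lemma w_2_1 {α : Type*} (a : α) (f : Fin 2 → α) : Matrix.vecCons a f (1 : Fin 3) = f (0 : Fin 2) := rfl
lemma w_2_2 {α : Type*} (a : α) (f : Fin 2 → α) : Matrix.vecCons a f (2 : Fin 3) = f (1 : Fin 2) := rfl
lemma w_3_1 {α : Type*} (a : α) (f : Fin 3 → α) : Matrix.vecCons a f (1 : Fin 4) = f (0 : Fin 3) := rfl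
lemma w_3_2 {α : Type*} (a : α) (f : Fin 3 → α) : Matrix.vecCons a f (2 : Fin 4) = f (1 : Fin 3) := rfl
lemma w_3_3 {α : Type*} (a : α) (f : Fin 3 → α) : Matrix.vecCons a f (3 : Fin 4) = f (2 : Fin 3) := rfl
lemma w_4_1 {α : Type*} (a : α) (f : Fin 4 → α) : Matrix.vecCons a f (1 : Fin 5) = f (0 : Fin 4) := rfl
lemma w_4_2 {α : Type*} (a : α) (f : Fin 4 → α) : Matrix.vecCons a f (2 : Fin 5) = f (1 : Fin 4) := rfl
lemma w_4_3 {α : Type*} (a : α) (f : Fin 4 → α) : Matrix.vecCons a f (3 : Fin 5) = f (2 : Fin 4) := rfl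
lemma w_4_4 {α : Type*} (a : α) (f : Fin 4 → α) : Matrix.vecCons a f (4 : Fin 5) = f (3 : Fin 4) := rfl
lemma w_5_1 {α : Type*} (a : α) (f : Fin 5 → α) : Matrix.vecCons a f (1 : Fin 6) = f (0 : Fin 5) := rfl
lemma w_5_2 {α : Type*} (a : α) (f : Fin 5 → α) : Matrix.vecCons a f (2 : Fin 6) = f (1 : Fin 5) := rfl
lemma w_5_3 {α : Type*} (a : α) (f : Fin 5 → α) : Matrix.vecCons a f (3 : Fin 6) = f (2 : Fin 5) := rfl
lemma w_5_4 {α : Type*} (a : α) (f : Fin 5 → α) : Matrix.vecCons a f (4 : Fin 6) = f (3 : Fin 5) := rfl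
lemma w_5_5 {α : Type*} (a : α) (f : Fin 5 → α) : Matrix.vecCons a f (5 : Fin 6) = f (4 : Fin 5) := rfl

/-- Explicit equivalence between `Fin 6` and `Fin 3 × Fin 2`. -/
def myE : Fin 6 ≃ Fin 3 × Fin 2 where
  toFun := ![(0,0),(0,1),(1,0),(1,1),(2,0),(2,1)]
  invFun := fun p => finProdFinEquiv p
  left_inv := by decide
  right_inv := by decide

lemma myE_apply (i : Fin 6) : myE i = ![((0:Fin 3),(0:Fin 2)),(0,1),(1,0),(1,1),(2,0),(2,1)] i := rfl

end AuxLemmasForStmt13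

/-- determinant of the stage matrix of the 3-stage Lobatto IIIC method. -/
theorem stmt_13 (lam : ℝ) (hlam : 0 < lam)
    (L : Matrix (Fin 2) (Fin 2) ℝ) (hL : L = !![0, 1; -lam, 0])
    (A : Matrix (Fin 3) (Fin 3) ℝ)
    (hA : A = !![1/6, -1/3, 1/6; 1/6, 5/12, -1/12; 1/6, 2/3, 1/6]) :
    ∀ Δt : ℝ, 0 < Δt →
      ((1 : Matrix (Fin 3 × Fin 2) (Fin 3 × Fin 2) ℝ) - Δt • (A ⊗ₖ L)).det
        = (576 + 36 * lam * Δt ^ 2 + lam ^ 3 * Δt ^ 6) / 576 ∧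
      0 < (576 + 36 * lam * Δt ^ 2 + lam ^ 3 * Δt ^ 6) / 576 := by
  subst hL hA
  intro Δt hΔt
  constructor
  · rw [← Matrix.det_submatrix_equiv_self myE]
    simp [-Matrix.det_submatrix_equiv_self, Matrix.det_succ_row_zero,
      Fin.sum_univ_succ, Matrix.submatrix_apply, myE_apply, Matrix.sub_apply,
      Matrix.one_apply, Matrix.kroneckerMap_apply, Matrix.smul_apply,
      Prod.ext_iff, sa_1_0_0, sa_1_1_0, sa_2_0_0, sa_2_0_1, sa_2_1_0, sa_2_1_1, sa_2_2_0, sa_2_2_1, sa_3_0_0, sa_3_0_1, sa_3_0_2, sa_3_1_0, sa_3_1_1, sa_3_1_2, sa_3_2_0, sa_3_2_1, sa_3_2_2, sa_3_3_0, sa_3_3_1, sa_3_3_2, sa_4_0_0, sa_4_0_1, sa_4_0_2, sa_4_0_3, sa_4_1_0, sa_4_1_1, sa_4_1_2, sa_4_1_3, sa_4_2_0, sa_4_2_1, sa_4_2_2, sa_4_2_3, sa_4_3_0, sa_4_3_1, sa_4_3_2, sa_4_3_3, sa_4_4_0, sa_4_4_1, sa_4_4_2, sa_4_4_3, sa_5_0_0,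 sa_5_0_1, sa_5_0_2, sa_5_0_3, sa_5_0_4, sa_5_1_0, sa_5_1_1, sa_5_1_2, sa_5_1_3, sa_5_1_4, sa_5_2_0, sa_5_2_1, sa_5_2_2, sa_5_2_3, sa_5_2_4, sa_5_3_0, sa_5_3_1, sa_5_3_2, sa_5_3_3, sa_5_3_4, sa_5_4_0, sa_5_4_1, sa_5_4_2, sa_5_4_3, sa_5_4_4, sa_5_5_0, sa_5_5_1, sa_5_5_2, sa_5_5_3, sa_5_5_4, cs_1_0, su_1_0, cs_2_0, su_2_0, cs_2_1, su_2_1, cs_3_0, su_3_0, cs_3_1, su_3_1, cs_3_2, su_3_2, cs_4_0, su_4_0, cs_4_1, su_4_1, cs_4_2, su_4_2, cs_4_3, su_4_3, cs_5_0, su_5_0, cs_5_1, su_5_1, cs_5_2, su_5_2, cs_5_3, su_5_3, cs_5_4, su_5_4, w_1_1, w_2_1, w_2_2, w_3_1, w_3_2, w_3_3, w_4_1, w_4_2, w_4_3, w_4_4, w_5_1, w_5_2, w_5_3, w_5_4, w_5_5]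
    ring
  · positivity
end

section
/- Let s = r+1, let L ∈ ℝ^{2×2} be invertible, A ∈ ℝ^{s×s} with last row equal to the weight vector b (i.e., a_{s,j} = b_j for all j), let N⁵ ∈ ℝ^{s×s} be the matrix with all columns zero except the last, which has all entries -1, and set N⁴ = Δt A. Assume K = I_{2s} - N⁴ ⊗ L is invertible. Define the RK iteration: k_n solves (I_{2s} - Δt A ⊗ L)k_n = 1_s ⊗ (L z_n), and z_{n+1} = z_n + Δt Σ_j b_j k_{j,n}; define the DG iteration: ẑ_{n+1} solves (I_{2s} - N⁴ ⊗ L)ẑ_{n+1} = -(N⁵ ⊗ I₂)ẑ_n. If the last 2 components of ẑ_0 equal z_0, then for all n ≥ 1 the last 2 components of ẑ_n equal z_n and ẑ_n = (I_s ⊗ L⁻¹)k_{n-1}. -/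
/-!
Multiplying the RK stage system by `1 ⊗ₖ L⁻¹`, which commutes with `K = 1 - N4 ⊗ₖ L`, shows that
`(1 ⊗ₖ L⁻¹) *ᵥ k n` solves `K x = 1_s ⊗ z n`. The DG right-hand side `-(N5 ⊗ₖ 1) *ᵥ zh n` is
`1_s ⊗ (last block of zh n)`, so whenever that block is `z n`, invertibility of `K` gives
`zh (n + 1) = (1 ⊗ₖ L⁻¹) *ᵥ k n`. Because the last row of `A` is `b`, the last RK stage is
`L *ᵥ z (n + 1)`, hence the last block of `zh (n + 1)` is `z (n + 1)`, and induction on `n` closes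
the argument.
-/

open Matrix Kronecker

namespace Matrix

variable {ι m R : Type*} [Fintype ι] [Fintype m]

section CommSemiring

variable [CommSemiring R]

theorem kronecker_mulVec_apply (M : Matrix ι ι R) (B : Matrix m m R) (w : ι × m → R)
    (i : ι) (a : m) :
    ((M ⊗ₖ B) *ᵥ w) (i, a) = ∑ j, M i j * (B *ᵥ Function.curry w j) a := by
  simp [mulVec, dotProduct, Fintype.sum_prod_type, Finset.mul_sum, mul_assoc]

theorem commute_one_kronecker_kronecker [DecidableEq ι] {B L : Matrix m m R} (h : Commute B L)
    (M : Matrix ι ι R) : Commute (1 ⊗ₖ B) (M ⊗ₖ L) := by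
  simp only [Commute, SemiconjBy, ← mul_kronecker_mul, one_mul, mul_one, h.eq]

variable [DecidableEq ι]

theorem curry_one_kronecker_mulVec (B : Matrix m m R) (w : ι × m → R) (i : ι) :
    Function.curry ((1 ⊗ₖ B) *ᵥ w) i = B *ᵥ Function.curry w i := by
  ext a
  simp [kronecker_mulVec_apply, one_apply]

theorem one_kronecker_mulVec_const (B : Matrix m m R) (v : m → R) :
    (1 ⊗ₖ B : Matrix (ι × m) (ι × m) R) *ᵥ (fun p => v p.2) = fun p => (B *ᵥ v) p.2 := by
  ext ⟨i, a⟩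
  exact congrFun (curry_one_kronecker_mulVec B _ i) a

end CommSemiring

theorem neg_kronecker_one_mulVec_of_single_col [CommRing R] [DecidableEq ι] [DecidableEq m]
    {N : Matrix ι ι R} {c : ι} (hN : ∀ i j, N i j = if j = c then -1 else 0) (w : ι × m → R) :
    -((N ⊗ₖ (1 : Matrix m m R)) *ᵥ w) = fun p => w (c, p.2) := by
  ext ⟨i, a⟩
  simp [kronecker_mulVec_apply, hN]

end Matrix

section TimeStepping

variable {ι m R : Type*} [Fintype ι] [DecidableEq ι] [Fintype m] [DecidableEq m] [CommRing R]

theorem stage_eq_mulVec_update_of_row_eq_weights {A : Matrix ι ι R} {b : ι → R} {c : ι}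
    (hAb : ∀ j, A c j = b j) {L : Matrix m m R} {Δt : R} {κ : ι × m → R} {y : m → R}
    (hκ : (1 - Δt • (A ⊗ₖ L)) *ᵥ κ = fun p => (L *ᵥ y) p.2) :
    Function.curry κ c = L *ᵥ (y + Δt • ∑ j, b j • Function.curry κ j) := by
  ext a
  have hrow := congrFun hκ (c, a)
  simp only [sub_mulVec, one_mulVec, smul_mulVec, Pi.sub_apply, Pi.smul_apply, smul_eq_mul,
    kronecker_mulVec_apply, hAb] at hrow
  simp only [mulVec_add, mulVec_smul, mulVec_sum, Pi.add_apply, Pi.smul_apply, smul_eq_mul,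
    Finset.sum_apply, Function.curry_apply]
  linear_combination hrow

theorem eq_one_kronecker_inv_mulVec {M : Matrix ι ι R} {L : Matrix m m R} (hL : IsUnit L.det)
    (hK : IsUnit (1 - M ⊗ₖ L).det) {κ w : ι × m → R} {y : m → R}
    (hκ : (1 - M ⊗ₖ L) *ᵥ κ = fun p => (L *ᵥ y) p.2)
    (hw : (1 - M ⊗ₖ L) *ᵥ w = fun p => y p.2) :
    w = (1 ⊗ₖ L⁻¹) *ᵥ κ := by
  refine mulVec_injective_of_isUnit ((isUnit_iff_isUnit_det _).mpr hK) ?_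
  have hcomm : Commute (1 - M ⊗ₖ L) (1 ⊗ₖ L⁻¹) :=
    ((Commute.one_right _).sub_right (commute_one_kronecker_kronecker
      ((nonsing_inv_mul L hL).trans (mul_nonsing_inv L hL).symm) M)).symm
  rw [hw, mulVec_mulVec, hcomm.eq, ← mulVec_mulVec, hκ, one_kronecker_mulVec_const,
    mulVec_mulVec, nonsing_inv_mul L hL, one_mulVec]

end TimeStepping

/-- equivalence of the DG time-stepping scheme in Kronecker form
with an s-stage implicit Runge–Kutta method (s = r+1) for z' = Lz. -/
theorem stmt_15 (r : ℕ) (Δt : ℝ)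
    (L : Matrix (Fin 2) (Fin 2) ℝ) (hL : IsUnit L.det)
    (A : Matrix (Fin (r + 1)) (Fin (r + 1)) ℝ) (b : Fin (r + 1) → ℝ)
    (hAb : ∀ j, A (Fin.last r) j = b j)
    (N5 : Matrix (Fin (r + 1)) (Fin (r + 1)) ℝ)
    (hN5 : ∀ i j, N5 i j = if j = Fin.last r then -1 else 0)
    (N4 : Matrix (Fin (r + 1)) (Fin (r + 1)) ℝ) (hN4 : N4 = Δt • A)
    (hK : IsUnit ((1 : Matrix (Fin (r + 1) × Fin 2) (Fin (r + 1) × Fin 2) ℝ)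
        - N4 ⊗ₖ L).det)
    (z : ℕ → Fin 2 → ℝ) (k : ℕ → Fin (r + 1) × Fin 2 → ℝ)
    (zh : ℕ → Fin (r + 1) × Fin 2 → ℝ)
    (hRK : ∀ n, ((1 : Matrix (Fin (r + 1) × Fin 2) (Fin (r + 1) × Fin 2) ℝ)
        - Δt • (A ⊗ₖ L)).mulVec (k n) = fun p => L.mulVec (z n) p.2)
    (hstep : ∀ n, z (n + 1) = z n + Δt • ∑ j : Fin (r + 1), b j • (fun i => k n (j, i)))
    (hDG : ∀ n, ((1 : Matrix (Fin (r + 1) × Fin 2) (Fin (r + 1) × Fin 2) ℝ)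
        - N4 ⊗ₖ L).mulVec (zh (n + 1))
        = -((N5 ⊗ₖ (1 : Matrix (Fin 2) (Fin 2) ℝ)).mulVec (zh n)))
    (h0 : ∀ i, zh 0 (Fin.last r, i) = z 0 i) :
    ∀ n : ℕ, 1 ≤ n →
      (∀ i, zh n (Fin.last r, i) = z n i) ∧
      zh n = (((1 : Matrix (Fin (r + 1)) (Fin (r + 1)) ℝ)) ⊗ₖ L⁻¹).mulVec (k (n - 1)) := by
  have hKk : ∀ n, ((1 : Matrix (Fin (r + 1) × Fin 2) (Fin (r + 1) × Fin 2) ℝ)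
      - N4 ⊗ₖ L) *ᵥ k n = fun p => (L *ᵥ z n) p.2 := by
    rwa [hN4, smul_kronecker]
  have step : ∀ n, (∀ i, zh n (Fin.last r, i) = z n i) →
      zh (n + 1) = (1 ⊗ₖ L⁻¹) *ᵥ k n ∧ ∀ i, zh (n + 1) (Fin.last r, i) = z (n + 1) i := by
    intro n hz
    have hzh : zh (n + 1) = (1 ⊗ₖ L⁻¹) *ᵥ k n := by
      refine eq_one_kronecker_inv_mulVec hL hK (hKk n) ?_
      rw [hDG n, neg_kronecker_one_mulVec_of_single_col hN5]
      exact funext fun p => hz p.2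
    have hstage : Function.curry (k n) (Fin.last r) = L *ᵥ z (n + 1) :=
      (stage_eq_mulVec_update_of_row_eq_weights hAb (hRK n)).trans (congrArg _ (hstep n).symm)
    refine ⟨hzh, fun i => ?_⟩
    have hblock := congrFun (curry_one_kronecker_mulVec L⁻¹ (k n) (Fin.last r)) i
    rwa [hstage, mulVec_mulVec, nonsing_inv_mul L hL, one_mulVec, ← hzh] at hblock
  have hlast : ∀ n, ∀ i, zh n (Fin.last r, i) = z n i :=
    fun n => Nat.rec h0 (fun n ih => (step n ih).2) n
  rintro (_ | n) hn
  · exact absurd hn (by norm_num)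
  · exact ⟨hlast (n + 1), (step n (hlast n)).1⟩
end

section
/- Let A, U, B, V be matrices and λ > 0, Δt > 0 such that I + Δt²λA is invertible. Define G = V - Δt²λ B (I + Δt²λ A)⁻¹ U. Suppose G = W D W⁻¹ with D diagonal of spectral radius ρ(G) ≤ 1, and consider two coupled error recurrences: (I + Δt²λA)E_{n+1} = U e_n + T_n and e_{n+1} = G e_n + θ_n with e_0 = 0, E_0 = 0. If ‖W⁻¹θ_n‖ ≤ C₁ Δt^{p+1}, ‖T_n‖ ≤ C₂ Δt^{a+1}, and ‖W‖ ≤ C₃ Δt^{q} for all n ≤ N with NΔt = T fixed, then ‖e_n‖ ≤ C Δt^{q+p} and ‖E_n‖ ≤ C' Δt^{min(a+1, q+p)} for constants C, C' independent of Δt. -/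
/-!
In the coordinates `W⁻¹ e` the recurrence for `e` is driven by the nonexpansive map `diagonal D`,
so `‖W⁻¹ eₙ‖ ≤ N C₁ Δt^(p+1) = T C₁ Δt^p` and `‖eₙ‖ ≤ C₃ C₁ T Δt^(q+p)`. The stage errors satisfy
`Eₙ₊₁ = (1 + Δt²λA)⁻¹ (U eₙ + Tₙ)`. Since `Δt = T / N` with `N ∈ ℕ`, the resolvent is bounded
uniformly: by the Neumann series for large `N`, and trivially for the finitely many others.
Finally, `Δt ≤ T` gives `Δt^e ≤ T^(e-μ) Δt^μ` for `μ ≤ e`, which merges the two powers into `Δt^μ`.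
-/

open Matrix

/-- The continuous linear map on Euclidean spaces induced by a (rectangular)
complex matrix; its operator norm is the ℓ²-induced matrix norm. -/
noncomputable def matCLM {m n : ℕ} (M : Matrix (Fin m) (Fin n) ℂ) :
    EuclideanSpace ℂ (Fin n) →L[ℂ] EuclideanSpace ℂ (Fin m) :=
  LinearMap.toContinuousLinearMap (Matrix.toEuclideanLin M)

open Filter Topology Asymptotics
open scoped Matrix.Norms.L2Operator

section matCLM

variable {k m n : ℕ}

lemma matCLM_apply (M : Matrix (Fin m) (Fin n) ℂ) (x : EuclideanSpace ℂ (Fin n)) :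
    matCLM M x = WithLp.toLp 2 (M *ᵥ WithLp.ofLp x) :=
  rfl

lemma norm_matCLM (M : Matrix (Fin m) (Fin n) ℂ) : ‖matCLM M‖ = ‖M‖ :=
  rfl

lemma matCLM_mul_apply (M : Matrix (Fin m) (Fin n) ℂ) (N : Matrix (Fin n) (Fin k) ℂ)
    (x : EuclideanSpace ℂ (Fin k)) : matCLM (M * N) x = matCLM M (matCLM N x) := by
  simp [matCLM_apply, mulVec_mulVec]

lemma matCLM_one_apply (x : EuclideanSpace ℂ (Fin n)) :
    matCLM (1 : Matrix (Fin n) (Fin n) ℂ) x = x := by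
  simp [matCLM_apply]

lemma matCLM_inv_apply_matCLM {M : Matrix (Fin n) (Fin n) ℂ} (hM : IsUnit M.det)
    (x : EuclideanSpace ℂ (Fin n)) : matCLM M⁻¹ (matCLM M x) = x := by
  rw [← matCLM_mul_apply, nonsing_inv_mul M hM, matCLM_one_apply]

lemma matCLM_apply_matCLM_inv {M : Matrix (Fin n) (Fin n) ℂ} (hM : IsUnit M.det)
    (x : EuclideanSpace ℂ (Fin n)) : matCLM M (matCLM M⁻¹ x) = x := by
  rw [← matCLM_mul_apply, mul_nonsing_inv M hM, matCLM_one_apply]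

lemma norm_le_norm_matCLM_inv_mul {M : Matrix (Fin n) (Fin n) ℂ} (hM : IsUnit M.det)
    {x y : EuclideanSpace ℂ (Fin n)} (h : matCLM M x = y) : ‖x‖ ≤ ‖matCLM M⁻¹‖ * ‖y‖ := by
  rw [← h, ← matCLM_inv_apply_matCLM hM x, matCLM_apply_matCLM_inv hM]
  exact (matCLM M⁻¹).le_opNorm _

lemma norm_matCLM_diagonal_le_one {D : Fin n → ℂ} (hD : ∀ i, ‖D i‖ ≤ 1) :
    ‖matCLM (diagonal D)‖ ≤ 1 := by
  rw [norm_matCLM, l2_opNorm_diagonal]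
  exact (pi_norm_le_iff_of_nonneg zero_le_one).mpr hD

end matCLM

lemma norm_le_mul_of_nonexpansive_recurrence {E : Type*} [SeminormedAddCommGroup E] {L : E → E}
    (hL : ∀ x, ‖L x‖ ≤ ‖x‖) {N : ℕ} {u v : ℕ → E} {X : ℝ} (hu0 : u 0 = 0)
    (hu : ∀ n < N, u (n + 1) = L (u n) + v n) (hv : ∀ n < N, ‖v n‖ ≤ X) :
    ∀ n ≤ N, ‖u n‖ ≤ n * X := by
  intro n hn
  induction n with
  | zero => simp [hu0]
  | succ n ih =>
    calc ‖u (n + 1)‖ ≤ ‖L (u n)‖ + ‖v n‖ := hu n hn ▸ norm_add_le _ _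
      _ ≤ n * X + X := add_le_add ((hL _).trans (ih (by omega))) (hv n hn)
      _ = (n + 1 : ℕ) * X := by push_cast; ring

lemma norm_le_of_diagonalizable_recurrence {d N : ℕ} {G W : Matrix (Fin d) (Fin d) ℂ}
    {D : Fin d → ℂ} (hGW : G = W * diagonal D * W⁻¹) (hW : IsUnit W.det) (hD : ∀ i, ‖D i‖ ≤ 1)
    {e θ : ℕ → EuclideanSpace ℂ (Fin d)} {X Y : ℝ} (he0 : e 0 = 0)
    (he : ∀ n < N, e (n + 1) = matCLM G (e n) + θ n)
    (hθ : ∀ n ≤ N, ‖matCLM W⁻¹ (θ n)‖ ≤ X) (hWY : ‖matCLM W‖ ≤ Y) :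
    ∀ n ≤ N, ‖e n‖ ≤ Y * (N * X) := by
  have hmodal : ∀ n ≤ N, ‖matCLM W⁻¹ (e n)‖ ≤ n * X := by
    refine norm_le_mul_of_nonexpansive_recurrence (L := matCLM (diagonal D)) (fun x => ?_)
      (by simp [he0]) (fun n hn => ?_) (fun n hn => hθ n hn.le)
    · simpa using ((matCLM _).le_opNorm x).trans
        (mul_le_of_le_one_left (norm_nonneg x) (norm_matCLM_diagonal_le_one hD))
    · rw [he n hn, map_add, ← matCLM_mul_apply, ← matCLM_mul_apply, hGW, Matrix.mul_assoc,
        nonsing_inv_mul_cancel_left _ _ hW]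
  have hX : 0 ≤ X := (norm_nonneg _).trans (hθ 0 N.zero_le)
  intro n hn
  calc ‖e n‖ = ‖matCLM W (matCLM W⁻¹ (e n))‖ := by rw [matCLM_apply_matCLM_inv hW]
    _ ≤ ‖matCLM W‖ * ‖matCLM W⁻¹ (e n)‖ := (matCLM W).le_opNorm _
    _ ≤ Y * (N * X) := by
      gcongr
      · exact (norm_nonneg _).trans hWY
      · exact (hmodal n hn).trans (by gcongr)

lemma norm_le_of_implicit_recurrence {m d N : ℕ} {S : Matrix (Fin m) (Fin m) ℂ}
    (hS : IsUnit S.det) {U : Matrix (Fin m) (Fin d) ℂ} {E Tn : ℕ → EuclideanSpace ℂ (Fin m)}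
    {e : ℕ → EuclideanSpace ℂ (Fin d)} {K X Y : ℝ} (hE0 : E 0 = 0)
    (hE : ∀ n < N, matCLM S (E (n + 1)) = matCLM U (e n) + Tn n) (hK : ‖matCLM S⁻¹‖ ≤ K)
    (he : ∀ n ≤ N, ‖e n‖ ≤ X) (hTn : ∀ n ≤ N, ‖Tn n‖ ≤ Y) :
    ∀ n ≤ N, ‖E n‖ ≤ K * (‖matCLM U‖ * X + Y) := by
  have hK0 : 0 ≤ K := (norm_nonneg _).trans hK
  rintro (_ | n) hn
  · have hX := (norm_nonneg _).trans (he 0 N.zero_le)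
    have hY := (norm_nonneg _).trans (hTn 0 N.zero_le)
    rw [hE0, norm_zero]
    positivity
  calc ‖E (n + 1)‖ ≤ ‖matCLM S⁻¹‖ * ‖matCLM U (e n) + Tn n‖ :=
        norm_le_norm_matCLM_inv_mul hS (hE n hn)
    _ ≤ K * (‖matCLM U‖ * ‖e n‖ + ‖Tn n‖) :=
      mul_le_mul hK (norm_add_le_of_le ((matCLM U).le_opNorm _) le_rfl) (norm_nonneg _) hK0
    _ ≤ K * (‖matCLM U‖ * X + Y) := by
      gcongr
      exacts [he n (Nat.le_of_succ_le hn), hTn n (Nat.le_of_succ_le hn)]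

lemma bddAbove_range_norm_ringInverse_one_add {R : Type*} [NormedRing R]
    [HasSummableGeomSeries R] {x : ℕ → R} (hx : Tendsto x atTop (𝓝 0)) :
    BddAbove (Set.range fun N => ‖Ring.inverse (1 + x N)‖) := by
  have h := NormedRing.inverse_one_sub_norm.comp_tendsto (by simpa using hx.neg)
  simp only [Function.comp_def, sub_neg_eq_add] at h
  exact ((isBigO_one_iff ℝ).mp h).bddAbove_range

lemma tendsto_sq_div_natCast_mul_smul {m : ℕ} (A : Matrix (Fin m) (Fin m) ℂ) (lam T : ℝ) :
    Tendsto (fun N : ℕ => (((T / N) ^ 2 * lam : ℝ) : ℂ) • A) atTop (𝓝 0) := by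
  have h : Tendsto (fun N : ℕ => (T / N) ^ 2 * lam) atTop (𝓝 0) := by
    simpa using ((tendsto_const_div_atTop_nhds_zero_nat T).pow 2).mul_const lam
  simpa using ((Complex.continuous_ofReal.tendsto 0).comp h).smul_const A

lemma zpow_le_zpow_sub_mul_zpow {t R : ℝ} {m e : ℤ} (ht : 0 < t) (htR : t ≤ R) (hme : m ≤ e) :
    t ^ e ≤ R ^ (e - m) * t ^ m := by
  calc t ^ e = t ^ (e - m) * t ^ m := by rw [← zpow_add₀ ht.ne', sub_add_cancel]
    _ ≤ R ^ (e - m) * t ^ m := by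
      gcongr
      exact zpow_le_zpow_left₀ (by omega) ht.le htR

lemma le_mul_zpow_min_of_le_add {x t R c₁ c₂ : ℝ} {e₁ e₂ : ℤ} (ht : 0 < t) (htR : t ≤ R)
    (hx : x ≤ c₁ * t ^ e₁ + c₂ * t ^ e₂) :
    x ≤ (|c₁| * R ^ (e₁ - min e₁ e₂) + |c₂| * R ^ (e₂ - min e₁ e₂)) * t ^ min e₁ e₂ := by
  have h₁ := zpow_le_zpow_sub_mul_zpow ht htR (min_le_left e₁ e₂)
  have h₂ := zpow_le_zpow_sub_mul_zpow ht htR (min_le_right e₁ e₂)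
  calc x ≤ |c₁| * t ^ e₁ + |c₂| * t ^ e₂ := by
        refine hx.trans (add_le_add ?_ ?_) <;> gcongr <;> exact le_abs_self _
    _ ≤ |c₁| * (R ^ (e₁ - min e₁ e₂) * t ^ min e₁ e₂)
        + |c₂| * (R ^ (e₂ - min e₁ e₂) * t ^ min e₁ e₂) := by gcongr
    _ = _ := by ring

theorem stmt_16_general (m d : ℕ) (lam T C₁ C₂ C₃ : ℝ) (p a q : ℤ)
    (A : Matrix (Fin m) (Fin m) ℂ) (U : Matrix (Fin m) (Fin d) ℂ)
    (B : Matrix (Fin d) (Fin m) ℂ) (V : Matrix (Fin d) (Fin d) ℂ)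
    (hT : 0 < T) :
    ∃ C C' : ℝ, ∀ Δt : ℝ, 0 < Δt → ∀ N : ℕ, (N : ℝ) * Δt = T →
      ∀ (G W : Matrix (Fin d) (Fin d) ℂ) (D : Fin d → ℂ),
        IsUnit ((1 : Matrix (Fin m) (Fin m) ℂ) + ((Δt ^ 2 * lam : ℝ) : ℂ) • A).det →
        G = V - ((Δt ^ 2 * lam : ℝ) : ℂ) •
          (B * ((1 : Matrix (Fin m) (Fin m) ℂ) + ((Δt ^ 2 * lam : ℝ) : ℂ) • A)⁻¹ * U) →
        G = W * Matrix.diagonal D * W⁻¹ →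
        IsUnit W.det →
        (∀ i, ‖D i‖ ≤ 1) →
        ∀ (E Tn : ℕ → EuclideanSpace ℂ (Fin m)) (e θ : ℕ → EuclideanSpace ℂ (Fin d)),
          e 0 = 0 → E 0 = 0 →
          (∀ n < N, matCLM ((1 : Matrix (Fin m) (Fin m) ℂ)
              + ((Δt ^ 2 * lam : ℝ) : ℂ) • A) (E (n + 1)) = matCLM U (e n) + Tn n) →
          (∀ n < N, e (n + 1) = matCLM G (e n) + θ n) →
          (∀ n ≤ N, ‖matCLM W⁻¹ (θ n)‖ ≤ C₁ * Δt ^ (p + 1)) →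
          (∀ n ≤ N, ‖Tn n‖ ≤ C₂ * Δt ^ (a + 1)) →
          ‖matCLM W‖ ≤ C₃ * Δt ^ q →
          ∀ n ≤ N, ‖e n‖ ≤ C * Δt ^ (q + p) ∧ ‖E n‖ ≤ C' * Δt ^ (min (a + 1) (q + p)) := by
  obtain ⟨K, hK⟩ :=
    bddAbove_range_norm_ringInverse_one_add (tendsto_sq_div_natCast_mul_smul A lam T)
  set μ := min (a + 1) (q + p)
  refine ⟨C₃ * C₁ * T,
    |K * C₂| * T ^ (a + 1 - μ) + |K * ‖matCLM U‖ * (C₃ * C₁ * T)| * T ^ (q + p - μ),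
    fun Δt hΔt N hNT G W D hS _ hGW hW hD E Tn e θ he0 hE0 hE he hθ hTn hWnorm => ?_⟩
  have hN : (N : ℝ) ≠ 0 := by rintro h; rw [h, zero_mul] at hNT; exact hT.ne hNT
  have hΔtT : Δt ≤ T :=
    hNT ▸ le_mul_of_one_le_left hΔt.le 
      (Nat.one_le_cast.mpr (Nat.one_le_iff_ne_zero.mpr (mod_cast hN)))
  have hSinv : ‖matCLM (1 + ((Δt ^ 2 * lam : ℝ) : ℂ) • A)⁻¹‖ ≤ K := by
    simpa [eq_div_of_mul_eq hN (mul_comm (N : ℝ) Δt ▸ hNT), norm_matCLM,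
      nonsing_inv_eq_ringInverse] using hK ⟨N, rfl⟩
  have hsteps : C₃ * Δt ^ q * (N * (C₁ * Δt ^ (p + 1))) = C₃ * C₁ * T * Δt ^ (q + p) := by
    rw [← hNT, zpow_add₀ hΔt.ne', zpow_add₀ hΔt.ne', zpow_one]; ring
  have he_le : ∀ n ≤ N, ‖e n‖ ≤ C₃ * C₁ * T * Δt ^ (q + p) := fun n hn =>
    hsteps ▸ norm_le_of_diagonalizable_recurrence hGW hW hD he0 he hθ hWnorm n hn
  refine fun n hn => ⟨he_le n hn, le_mul_zpow_min_of_le_add hΔt hΔtT ?_⟩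
  calc ‖E n‖ ≤ K * (‖matCLM U‖ * (C₃ * C₁ * T * Δt ^ (q + p)) + C₂ * Δt ^ (a + 1)) :=
        norm_le_of_implicit_recurrence hS hE0 hE hSinv he_le hTn n hn
    _ = K * C₂ * Δt ^ (a + 1) + K * ‖matCLM U‖ * (C₃ * C₁ * T) * Δt ^ (q + p) := by ring

/-- convergence estimate for General Linear Methods with coupled
error recurrences. -/
theorem stmt_16 (m d : ℕ) (lam T C₁ C₂ C₃ : ℝ) (p a q : ℤ)
    (A : Matrix (Fin m) (Fin m) ℂ) (U : Matrix (Fin m) (Fin d) ℂ)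
    (B : Matrix (Fin d) (Fin m) ℂ) (V : Matrix (Fin d) (Fin d) ℂ)
    (hlam : 0 < lam) (hT : 0 < T) :
    ∃ C C' : ℝ, ∀ Δt : ℝ, 0 < Δt → ∀ N : ℕ, (N : ℝ) * Δt = T →
      ∀ (G W : Matrix (Fin d) (Fin d) ℂ) (D : Fin d → ℂ),
        IsUnit ((1 : Matrix (Fin m) (Fin m) ℂ) + ((Δt ^ 2 * lam : ℝ) : ℂ) • A).det →
        G = V - ((Δt ^ 2 * lam : ℝ) : ℂ) •
          (B * ((1 : Matrix (Fin m) (Fin m) ℂ) + ((Δt ^ 2 * lam : ℝ) : ℂ) • A)⁻¹ * U) →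
        G = W * Matrix.diagonal D * W⁻¹ →
        IsUnit W.det →
        (∀ i, ‖D i‖ ≤ 1) →
        ∀ (E Tn : ℕ → EuclideanSpace ℂ (Fin m)) (e θ : ℕ → EuclideanSpace ℂ (Fin d)),
          e 0 = 0 → E 0 = 0 →
          (∀ n < N, matCLM ((1 : Matrix (Fin m) (Fin m) ℂ)
              + ((Δt ^ 2 * lam : ℝ) : ℂ) • A) (E (n + 1)) = matCLM U (e n) + Tn n) →
          (∀ n < N, e (n + 1) = matCLM G (e n) + θ n) →
          (∀ n ≤ N, ‖matCLM W⁻¹ (θ n)‖ ≤ C₁ * Δt ^ (p + 1)) →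
          (∀ n ≤ N, ‖Tn n‖ ≤ C₂ * Δt ^ (a + 1)) →
          ‖matCLM W‖ ≤ C₃ * Δt ^ q →
          ∀ n ≤ N, ‖e n‖ ≤ C * Δt ^ (q + p) ∧ ‖E n‖ ≤ C' * Δt ^ (min (a + 1) (q + p)) :=
  stmt_16_general m d lam T C₁ C₂ C₃ p a q A U B V hT
end
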